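/- Fix c ≥ 1 and k ≥ 0. The map sending a multiset of arc diagrams on {0,…,c+1} to the multiset union of their signed arcs restricts to a bijection from the collection of multisets of cardinality k of arc diagrams whose underlying diagrams pairwise neither cross nor interfere onto the collection of consistent multisets of signed arcs of rank k. -/

import Mathlib

namespace PaperDKK

/-- A signed arc on `{0,…,c+1}` : `(i, j, σ)` with `i < j` and a sign
(`true` = `+`, i.e. top; `false` = `−`, i.e. bottom). -/
abbrev SArc : Type := ℕ × ℕ × Bool

/-- Validity of an arc on `{0,…,c+1}`. -/
def ValidArc (c : ℕ) (x : SArc) : Prop := x.1 < x.2.1 ∧ x.2.1 ≤ c + 1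

/-- An arc diagram on `{0,…,c+1}` : a sequence of arcs
`(0,i_1,σ_1), (i_1,i_2,σ_2), …, (i_{ℓ−1}, c+1, σ_ℓ)` with alternating signs. -/
def IsArcDiagram (c : ℕ) (d : List SArc) : Prop :=
  d ≠ [] ∧
  (∀ x ∈ d.head?, x.1 = 0) ∧
  (∀ x ∈ d.getLast?, x.2.1 = c + 1) ∧
  List.Chain' (fun x y => x.2.1 = y.1 ∧ x.2.2 ≠ y.2.2) d ∧
  ∀ x ∈ d, x.1 < x.2.1

/-- Two arcs of the same sign cross if they interleave: `i < k ≤ j < l`. -/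
def Cross (x y : SArc) : Prop :=
  x.2.2 = y.2.2 ∧
  ((x.1 < y.1 ∧ y.1 ≤ x.2.1 ∧ x.2.1 < y.2.1) ∨
   (y.1 < x.1 ∧ x.1 ≤ y.2.1 ∧ y.2.1 < x.2.1))

/-- Two arc diagrams cross if some arc of one crosses some arc of the other. -/
def DiagCross (d₁ d₂ : List SArc) : Prop := ∃ x ∈ d₁, ∃ y ∈ d₂, Cross x y

/-- Two arc diagrams interfere if they contain segments
`(a,i_0)^{σ_0}, (i_0,i_1)^{σ_1}, …, (i_{k−1},i_k)^{σ_k}, (i_k,b)^{σ_{k+1}}` and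
`(a′,i_0)^{σ_0}, (i_0,i_1)^{σ_1}, …, (i_{k−1},i_k)^{σ_k}, (i_k,b′)^{σ_{k+1}}`
with the same middle part, `a < a′` and `b < b′`. -/
def Interfere (d₁ d₂ : List SArc) : Prop :=
  ∃ (M : List SArc) (a a' b b' i j : ℕ) (σ τ : Bool),
    a < a' ∧ b < b' ∧
    ((a, i, σ) :: (M ++ [(j, b, τ)])) <:+: d₁ ∧
    ((a', i, σ) :: (M ++ [(j, b', τ)])) <:+: d₂

/-- The `A`-part of the bipartition of an arc diagram: the gaps `g` covered by a
`+` (top) arc. -/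
def Apart (c : ℕ) (d : List SArc) : Finset ℕ :=
  (Finset.Icc 1 (c + 1)).filter (fun g => ∃ x ∈ d, x.2.2 = true ∧ x.1 < g ∧ g ≤ x.2.1)

/-- A multiset of arc diagrams is stacked iff the bipartitions of its members are
pairwise nested, i.e. their `A`-parts are pairwise comparable under inclusion. -/
def Stacked (c : ℕ) (D : Multiset (List SArc)) : Prop :=
  ∀ d₁ ∈ D, ∀ d₂ ∈ D, Apart c d₁ ⊆ Apart c d₂ ∨ Apart c d₂ ⊆ Apart c d₁

/-- Consistency of a multiset of signed arcs: valid non-crossing arcs such that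
at each `x ∈ {1,…,c}` the number of incoming arcs equals the number of outgoing
arcs (with multiplicity). -/
def Consistent (c : ℕ) (A : Multiset SArc) : Prop :=
  (∀ x ∈ A, ValidArc c x) ∧
  (∀ x ∈ A, ∀ y ∈ A, ¬ Cross x y) ∧
  ∀ g : ℕ, 1 ≤ g → g ≤ c →
    Multiset.card (A.filter (fun x => x.2.1 = g)) =
      Multiset.card (A.filter (fun x => x.1 = g))

/-- The rank of a multiset of arcs: the number of arcs with left endpoint `0`
(with multiplicity). -/
def arcRank (A : Multiset SArc) : ℕ := Multiset.card (A.filter (fun x => x.1 = 0))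

/-- The multiset union of the arcs of a multiset of arc diagrams. -/
def arcsOf (D : Multiset (List SArc)) : Multiset SArc :=
  D.bind (fun l => (l : Multiset SArc))


/-! ### Auxiliary machinery -/

lemma cross_symm {x y : SArc} (h : Cross x y) : Cross y x :=
  ⟨h.1.symm, h.2.elim Or.inr Or.inl⟩

section Basic
variable {c : ℕ} {d : List SArc}

lemma diag_chain (h : IsArcDiagram c d) :
    List.Chain' (fun x y : SArc => x.2.1 = y.1) d :=
  List.IsChain.imp (fun a b hab => hab.1) h.2.2.2.1

lemma chain_pairwise : ∀ (d : List SArc),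
    List.Chain' (fun x y : SArc => x.2.1 = y.1) d →
    (∀ x ∈ d, x.1 < x.2.1) →
    d.Pairwise (fun x y : SArc => x.2.1 ≤ y.1) := by
  intro d
  induction d with
  | nil => simp
  | cons x t ih =>
    intro hc hv
    rw [show @List.Chain' SArc = List.IsChain from rfl, List.isChain_cons] at hc
    have ht := ih hc.2 (fun z hz => hv z (List.mem_cons_of_mem _ hz))
    refine List.pairwise_cons.2 ⟨?_, ht⟩
    intro y hy
    cases t with
    | nil => simp at hy
    | cons z t' =>
      have hxz : x.2.1 = z.1 := hc.1 z rfl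
      rcases List.mem_cons.1 hy with rfl | hy'
      · exact le_of_eq hxz
      · have := (List.pairwise_cons.1 ht).1 y hy'
        have hz := hv z (by simp)
        omega

lemma diag_pairwise (h : IsArcDiagram c d) :
    d.Pairwise (fun x y : SArc => x.2.1 ≤ y.1) :=
  chain_pairwise d (diag_chain h) h.2.2.2.2

lemma diag_pairwise_snd (h : IsArcDiagram c d) :
    d.Pairwise (fun x y : SArc => x.2.1 < y.2.1) := by
  refine (diag_pairwise h).imp_of_mem ?_
  intro a b _ hb hab
  have := h.2.2.2.2 b hb
  omega

lemma diag_pairwise_fst (h : IsArcDiagram c d) :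
    d.Pairwise (fun x y : SArc => x.1 < y.1) := by
  refine (diag_pairwise h).imp_of_mem ?_
  intro a b ha _ hab
  have := h.2.2.2.2 a ha
  omega

lemma diag_head (h : IsArcDiagram c d) {x : SArc} {t : List SArc} (hd : d = x :: t) :
    x.1 = 0 := by
  have := h.2.1
  subst hd; exact this x rfl

lemma diag_last (h : IsArcDiagram c d) {p : List SArc} {x : SArc} (hd : d = p ++ [x]) :
    x.2.1 = c + 1 := by
  have := h.2.2.1
  subst hd
  exact this x (by simp)

lemma diag_concat (h : IsArcDiagram c d) : ∃ p x, d = p ++ [x] := by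
  rcases List.eq_nil_or_concat d with rfl | ⟨p, x, hx⟩
  · exact absurd rfl h.1
  · exact ⟨p, x, by rw [hx, List.concat_eq_append]⟩

lemma diag_snd_le (h : IsArcDiagram c d) {x : SArc} (hx : x ∈ d) : x.2.1 ≤ c + 1 := by
  obtain ⟨p, l, rfl⟩ := diag_concat h
  have hl := diag_last h rfl
  rcases List.mem_append.1 hx with hx | hx
  · have := List.pairwise_append.1 (diag_pairwise_snd h)
    have := this.2.2 x hx l (by simp)
    omega
  · simp at hx; subst hx; omega

/-- an arc of a diagram with right endpoint `c+1` is the last arc -/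
lemma diag_mem_last (h : IsArcDiagram c d) {x : SArc} (hx : x ∈ d)
    (hc : x.2.1 = c + 1) : ∃ p, d = p ++ [x] := by
  obtain ⟨p, q, rfl⟩ := List.append_of_mem hx
  cases q with
  | nil => exact ⟨p, rfl⟩
  | cons y q' =>
    exfalso
    have hp := List.pairwise_append.1 (diag_pairwise_snd h)
    have h1 := (List.pairwise_cons.1 hp.2.1).1 y (by simp)
    have := diag_snd_le h (x := y) (by simp)
    omega

/-- an arc of a diagram with right endpoint `< c+1` has a successor arc -/
lemma diag_mem_next (h : IsArcDiagram c d) {x : SArc} (hx : x ∈ d)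
    (hc : x.2.1 < c + 1) : ∃ p y q, d = p ++ x :: y :: q ∧ x.2.1 = y.1 ∧ x.2.2 ≠ y.2.2 := by
  obtain ⟨p, q, rfl⟩ := List.append_of_mem hx
  cases q with
  | nil => exact absurd (diag_last h rfl) (by omega)
  | cons y q' =>
    refine ⟨p, y, q', rfl, ?_⟩
    have := h.2.2.2.1
    rw [show @List.Chain' SArc = List.IsChain from rfl, List.isChain_append_cons_cons] at this
    exact this.2.1

/-- two arcs of a diagram with the same right endpoint coincide -/
lemma diag_eq_of_snd_eq (h : IsArcDiagram c d) {x y : SArc} (hx : x ∈ d) (hy : y ∈ d)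
    (hxy : x.2.1 = y.2.1) : x = y := by
  by_contra hne
  have hP : d.Pairwise (fun a b : SArc => a.2.1 ≠ b.2.1) :=
    (diag_pairwise_snd h).imp (fun hab => by omega)
  haveI : Std.Symm (fun a b : SArc => a.2.1 ≠ b.2.1) := ⟨fun _ _ hab => Ne.symm hab⟩
  exact List.Pairwise.forall hP hx hy hne hxy

/-- positional uniqueness of an arc in a diagram -/
lemma unique_split : ∀ (p p' : List SArc) {x x' : SArc} {q q' : List SArc},
    (p ++ x :: q).Pairwise (fun a b : SArc => a.2.1 < b.2.1) →
    p ++ x :: q = p' ++ x' :: q' → x.2.1 = x'.2.1 → p = p' ∧ x = x' ∧ q = q' := by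
  intro p
  induction p with
  | nil =>
    intro p' x x' q q' hp h hx
    cases p' with
    | nil =>
      refine ⟨rfl, ?_⟩
      simpa using h
    | cons z t =>
      exfalso
      simp only [List.nil_append, List.cons_append, List.cons.injEq] at h
      obtain ⟨rfl, h2⟩ := h
      have hx' : x' ∈ q := h2 ▸ (by simp)
      have := (List.pairwise_cons.1 hp).1 x' hx'
      omega
  | cons a t ih =>
    intro p' x x' q q' hp h hx
    cases p' with
    | nil =>
      exfalso
      simp only [List.cons_append, List.nil_append, List.cons.injEq] at h
      obtain ⟨rfl, h2⟩ := h
      have hxq : x ∈ q' := by rw [← h2]; simp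
      have := (List.pairwise_cons.1 hp).1 x (by simp)
      omega
    | cons a' t' =>
      simp only [List.cons_append, List.cons.injEq] at h
      obtain ⟨rfl, h2⟩ := h
      obtain ⟨h3, h4, h5⟩ := ih t' (List.pairwise_cons.1 hp).2 h2 hx
      exact ⟨by rw [h3], h4, h5⟩

/-- an infix of a diagram ending with arc `x` is a suffix of the part up to `x` -/
lemma infix_to_suffix {P₀ p q : List SArc} {x : SArc}
    (hd : ((p : List SArc) ++ x :: q).Pairwise (fun a b : SArc => a.2.1 < b.2.1))
    (h : (P₀ ++ [x]) <:+: (p ++ x :: q)) : (P₀ ++ [x]) <:+ (p ++ [x]) := by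
  obtain ⟨u, v, huv⟩ := h
  have h2 : (u ++ P₀) ++ x :: v = p ++ x :: q := by
    simpa [List.append_assoc] using huv
  obtain ⟨h3, -, -⟩ := unique_split (u ++ P₀) p (h2 ▸ hd) h2 rfl
  exact ⟨u, by rw [← h3]; simp⟩

end Basic


section Counting
variable {c : ℕ} {d : List SArc}

lemma flow_list {g : ℕ} : ∀ (t : List SArc) (x v : SArc),
    List.Chain' (fun a b : SArc => a.2.1 = b.1) (x :: t) →
    (x :: t).getLast (List.cons_ne_nil x t) = v →
    Multiset.countP (fun a : SArc => a.2.1 = g) (↑(x :: t) : Multiset SArc)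
        + (if x.1 = g then 1 else 0)
      = Multiset.countP (fun a : SArc => a.1 = g) (↑(x :: t) : Multiset SArc)
        + (if v.2.1 = g then 1 else 0) := by
  intro t
  induction t with
  | nil =>
    intro x v _ hv
    simp only [List.getLast_singleton] at hv
    subst hv
    simp only [← Multiset.cons_coe, Multiset.countP_cons]
    simp only [Multiset.coe_nil, Multiset.countP_zero]
    omega
  | cons y t' ih =>
    intro x v hc hv
    rw [show @List.Chain' SArc = List.IsChain from rfl, List.isChain_cons_cons] at hc
    have h1 : x.2.1 = y.1 := hc.1
    have hgl : (y :: t').getLast (List.cons_ne_nil y t') = v := by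
      rw [← hv]; exact (List.getLast_cons _).symm
    have IH := ih y v hc.2 hgl
    simp only [← Multiset.cons_coe, Multiset.countP_cons] at IH ⊢
    rw [h1]
    omega

lemma diag_flow (h : IsArcDiagram c d) {g : ℕ} (h1 : 1 ≤ g) (h2 : g ≤ c) :
    Multiset.countP (fun a : SArc => a.2.1 = g) (↑d : Multiset SArc)
      = Multiset.countP (fun a : SArc => a.1 = g) (↑d : Multiset SArc) := by
  obtain ⟨x, t, rfl⟩ : ∃ x t, d = x :: t := by
    cases d with
    | nil => exact absurd rfl h.1
    | cons x t => exact ⟨x, t, rfl⟩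
  have hfl := flow_list (g := g) t x ((x :: t).getLast (List.cons_ne_nil x t)) (diag_chain h) rfl
  have hx0 : x.1 = 0 := diag_head h rfl
  have hlast : ((x :: t).getLast (List.cons_ne_nil x t)).2.1 = c + 1 := by
    have := h.2.2.1
    rw [List.getLast?_eq_getLast (List.cons_ne_nil x t)] at this
    exact this _ rfl
  rw [hx0, hlast, if_neg (by omega : ¬ (0 = g)), if_neg (by omega : ¬ (c + 1 = g))] at hfl
  omega

lemma diag_rank (h : IsArcDiagram c d) :
    Multiset.countP (fun a : SArc => a.1 = 0) (↑d : Multiset SArc) = 1 := by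
  obtain ⟨x, t, rfl⟩ : ∃ x t, d = x :: t := by
    cases d with
    | nil => exact absurd rfl h.1
    | cons x t => exact ⟨x, t, rfl⟩
  have hx0 : x.1 = 0 := diag_head h rfl
  have ht : Multiset.countP (fun a : SArc => a.1 = 0) (↑t : Multiset SArc) = 0 := by
    refine Multiset.countP_eq_zero.2 ?_
    intro a ha
    have := (List.pairwise_cons.1 (diag_pairwise_fst h)).1 a (by simpa using ha)
    omega
  rw [← Multiset.cons_coe, Multiset.countP_cons, ht, if_pos hx0]

lemma countP_arcsOf (p : SArc → Prop) [DecidablePred p] (D : Multiset (List SArc)) :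
    Multiset.countP p (arcsOf D)
      = (D.map (fun d : List SArc => Multiset.countP p (↑d : Multiset SArc))).sum := by
  induction D using Multiset.induction_on with
  | empty => simp [arcsOf]
  | cons a s ih => simp [arcsOf, Multiset.cons_bind, Multiset.countP_add] at ih ⊢; simp [ih]

lemma mem_arcsOf {x : SArc} {D : Multiset (List SArc)} :
    x ∈ arcsOf D ↔ ∃ d ∈ D, x ∈ d := by
  simp [arcsOf, Multiset.mem_bind]

lemma diag_not_interfere_self (h : IsArcDiagram c d) : ¬ Interfere d d := by
  rintro ⟨M, a, a', b, b', i, j, σ, τ, haa, hbb, h1, h2⟩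
  have m1 : ((a, i, σ) : SArc) ∈ d := h1.subset (by simp)
  have m2 : ((a', i, σ) : SArc) ∈ d := h2.subset (by simp)
  have := diag_eq_of_snd_eq h m1 m2 rfl
  simp only [Prod.mk.injEq] at this
  omega

end Counting

section Key

def enc (x : SArc) : ℕ := Nat.pair x.1 (Nat.pair x.2.1 (cond x.2.2 1 0))

lemma enc_lt {x y : SArc} (h1 : x.1 < y.1) (h2 : x.2 = y.2) : enc x < enc y := by
  unfold enc
  rw [h2]
  exact Nat.pair_lt_pair_left _ h1

def key (w : List SArc) : List ℕ := (w.map enc).reverse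

lemma lex_append : ∀ (P : List ℕ) {a b : ℕ} (s t : List ℕ), a < b →
    P ++ a :: s < P ++ b :: t := by
  intro P
  induction P with
  | nil => intro a b s t h; exact List.Lex.rel h
  | cons x xs ih => intro a b s t h; exact List.Lex.cons (ih s t h)

lemma key_lt {w u : List SArc} {a a' : SArc} {s : List SArc}
    (hfst : a.1 < a'.1) (hsnd : a.2 = a'.2) (hw : a :: s <:+ w) (hu : a' :: s <:+ u) :
    key w < key u := by
  obtain ⟨p, rfl⟩ := hw
  obtain ⟨p', rfl⟩ := hu
  unfold key
  simp only [List.map_append, List.map_cons, List.reverse_append, List.reverse_cons,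
    List.append_assoc, List.singleton_append, List.cons_append, List.nil_append]
  exact lex_append _ _ _ (enc_lt hfst hsnd)

lemma div_front {α : Type*} : ∀ (l₁ l₂ : List α),
    l₁ <+: l₂ ∨ l₂ <+: l₁ ∨ ∃ s a b t₁ t₂, a ≠ b ∧ l₁ = s ++ a :: t₁ ∧ l₂ = s ++ b :: t₂ := by
  intro l₁
  induction l₁ with
  | nil => intro l₂; exact Or.inl (List.nil_prefix)
  | cons a t ih =>
    intro l₂
    cases l₂ with
    | nil => exact Or.inr (Or.inl (List.nil_prefix))
    | cons b t₂ =>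
      by_cases hab : a = b
      · subst hab
        rcases ih t₂ with h | h | ⟨s, x, y, t₁', t₂', hxy, h1, h2⟩
        · obtain ⟨r, rfl⟩ := h; exact Or.inl ⟨r, rfl⟩
        · obtain ⟨r, rfl⟩ := h; exact Or.inr (Or.inl ⟨r, rfl⟩)
        · exact Or.inr (Or.inr ⟨a :: s, x, y, t₁', t₂', hxy, by simp [h1], by simp [h2]⟩)
      · exact Or.inr (Or.inr ⟨[], a, b, t, t₂, hab, rfl, rfl⟩)

lemma div_suffix {α : Type*} (l₁ l₂ : List α) :
    l₁ <:+ l₂ ∨ l₂ <:+ l₁ ∨ ∃ a b s, a ≠ b ∧ a :: s <:+ l₁ ∧ b :: s <:+ l₂ := by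
  rcases div_front l₁.reverse l₂.reverse with h | h | ⟨s, a, b, t₁, t₂, hab, h1, h2⟩
  · exact Or.inl (List.reverse_prefix.1 h)
  · exact Or.inr (Or.inl (List.reverse_prefix.1 h))
  · right; right
    refine ⟨a, b, s.reverse, hab, ⟨t₁.reverse, ?_⟩, ⟨t₂.reverse, ?_⟩⟩
    · have := congrArg List.reverse h1
      simpa [List.reverse_append] using this.symm
    · have := congrArg List.reverse h2
      simpa [List.reverse_append] using this.symm

lemma pick_max {D : Multiset (List SArc)} {P : List SArc → Prop} [DecidablePred P]
    (h : ∃ d ∈ D, P d) : ∃ w ∈ D, P w ∧ ∀ u ∈ D, P u → key u ≤ key w := by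
  classical
  set l := D.toList.filter (fun d => decide (P d)) with hl
  have hne : l ≠ [] := by
    obtain ⟨d, hd, hPd⟩ := h
    intro h0
    have : d ∈ l := List.mem_filter.2 ⟨Multiset.mem_toList.2 hd, by simpa⟩
    simp [h0] at this
  obtain ⟨m, hm⟩ : ∃ m, m ∈ List.argmax key l := by
    cases hm : List.argmax key l with
    | none => exact absurd (List.argmax_eq_none.1 hm) hne
    | some m => exact ⟨m, by simp [Option.mem_def, hm]⟩
  have hml := List.mem_filter.1 (List.argmax_mem hm)
  refine ⟨m, Multiset.mem_toList.1 hml.1, by simpa using hml.2, ?_⟩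
  intro u hu hPu
  exact List.le_of_mem_argmax ((List.mem_filter (p := fun d => decide (P d))).2 ⟨Multiset.mem_toList.2 hu, by simpa⟩) (by convert hm)

end Key


section Step
variable {c : ℕ} {A : Multiset SArc} {g : ℕ}

lemma exists_of_countP_ne {p : SArc → Prop} [DecidablePred p] (h : Multiset.countP p A ≠ 0) :
    ∃ x ∈ A, p x := by
  by_contra hc
  push_neg at hc
  exact h (Multiset.countP_eq_zero.2 hc)

lemma countP_ne_of_mem {p : SArc → Prop} [DecidablePred p] {x : SArc} (hx : x ∈ A) (hp : p x) :
    Multiset.countP p A ≠ 0 := by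
  intro h
  exact (Multiset.countP_eq_zero.1 h) x hx hp

lemma pick_min_fst {P : SArc → Prop} [DecidablePred P]
    (h : ∃ x ∈ A, P x) : ∃ e ∈ A, P e ∧ ∀ x ∈ A, P x → e.1 ≤ x.1 := by
  classical
  set l := A.toList.filter (fun d => decide (P d)) with hl
  have hne : l ≠ [] := by
    obtain ⟨d, hd, hPd⟩ := h
    intro h0
    have : d ∈ l := List.mem_filter.2 ⟨Multiset.mem_toList.2 hd, by simpa⟩
    simp [h0] at this
  obtain ⟨m, hm⟩ : ∃ m, m ∈ List.argmin (fun x : SArc => x.1) l := by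
    cases hm : List.argmin (fun x : SArc => x.1) l with
    | none => exact absurd (List.argmin_eq_none.1 hm) hne
    | some m => exact ⟨m, by simp [Option.mem_def, hm]⟩
  have hml := List.mem_filter.1 (List.argmin_mem hm)
  refine ⟨m, Multiset.mem_toList.1 hml.1, by simpa using hml.2, ?_⟩
  intro u hu hPu
  exact List.le_of_mem_argmin (List.mem_filter.2 ⟨Multiset.mem_toList.2 hu, by simpa⟩) hm

/-- at the maximal traffic point `g`, all outgoing arcs are `(g, c+1, !σ)` and all
incoming arcs have sign `σ`. -/
lemma step_setup (hA : Consistent c A) (hg1 : 1 ≤ g) (hgc : g ≤ c)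
    (htr : Multiset.countP (fun x : SArc => x.2.1 = g) A ≠ 0)
    (hmax : ∀ h, g < h → h ≤ c → Multiset.countP (fun x : SArc => x.2.1 = h) A = 0) :
    ∃ σ : Bool, (∀ x ∈ A, x.1 = g → x = (g, c + 1, !σ)) ∧
      (∀ x ∈ A, x.2.1 = g → x.2.2 = σ) ∧ ((g, c + 1, !σ) : SArc) ∈ A := by
  obtain ⟨e₀, he₀A, he₀⟩ := exists_of_countP_ne htr
  have hxcnt : Multiset.countP (fun x : SArc => x.1 = g) A ≠ 0 := by
    simp only [Multiset.countP_eq_card_filter]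
    rw [← hA.2.2 g hg1 hgc]
    simpa [Multiset.countP_eq_card_filter] using htr
  obtain ⟨x₀, hx₀A, hx₀⟩ := exists_of_countP_ne hxcnt
  -- every outgoing arc at g ends at c+1
  have hout : ∀ x ∈ A, x.1 = g → x.2.1 = c + 1 := by
    intro x hx hxg
    obtain ⟨hv1, hv2⟩ := hA.1 x hx
    rcases Nat.lt_or_ge x.2.1 (c + 1) with hlt | hge
    · exfalso
      have h1 : g < x.2.1 := hxg ▸ hv1
      have := hmax x.2.1 h1 (by omega)
      exact countP_ne_of_mem (p := fun y : SArc => y.2.1 = x.2.1) hx rfl this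
    · omega
  set σ : Bool := !x₀.2.2 with hσ
  -- every incoming arc at g has sign σ
  have hin : ∀ x ∈ A, x.2.1 = g → x.2.2 = σ := by
    intro x hx hxg
    by_contra hne
    have hxs : x.2.2 = x₀.2.2 := by
      cases hb : x₀.2.2 <;> cases hb2 : x.2.2 <;> simp [hσ, hb, hb2] at hne ⊢
    obtain ⟨hv1, hv2⟩ := hA.1 x hx
    have hx₀c := hout x₀ hx₀A hx₀
    refine hA.2.1 x hx x₀ hx₀A ⟨hxs, Or.inl ?_⟩
    refine ⟨by omega, by omega, by omega⟩
  -- every outgoing arc at g has sign !σ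
  have hout2 : ∀ x ∈ A, x.1 = g → x.2.2 = !σ := by
    intro x hx hxg
    by_contra hne
    have hxs : x.2.2 = σ := by
      cases hb : x.2.2 <;> cases hb2 : σ <;> simp [hb, hb2] at hne ⊢
    have he₀s := hin e₀ he₀A he₀
    obtain ⟨hv1, hv2⟩ := hA.1 e₀ he₀A
    have hxc := hout x hx hxg
    refine hA.2.1 e₀ he₀A x hx ⟨by rw [he₀s, hxs], Or.inl ?_⟩
    refine ⟨by omega, by omega, by omega⟩
  refine ⟨σ, ?_, hin, ?_⟩
  · intro x hx hxg
    have h1 := hout x hx hxg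
    have h2 := hout2 x hx hxg
    exact Prod.ext (by omega) (Prod.ext (by simpa using h1) (by simpa using h2))
  · have h1 := hout x₀ hx₀A hx₀
    have h2 := hout2 x₀ hx₀A hx₀
    have : x₀ = ((g, c + 1, !σ) : SArc) :=
      Prod.ext (by omega) (Prod.ext (by simpa using h1) (by simpa using h2))
    exact this ▸ hx₀A

end Step


section Contract
variable {c : ℕ} {A : Multiset SArc} {g : ℕ}

lemma contract_consistent
    (hA : Consistent c A) (hg1 : 1 ≤ g) (hgc : g ≤ c)
    (hmax : ∀ h, g < h → h ≤ c → Multiset.countP (fun x : SArc => x.2.1 = h) A = 0)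
    {α : ℕ} {σ : Bool}
    (he₁ : ((α, g, σ) : SArc) ∈ A)
    (hmin : ∀ x ∈ A, x.2.1 = g → α ≤ x.1)
    {B : Multiset SArc}
    (hB : A = (α, g, σ) ::ₘ (g, c + 1, !σ) ::ₘ B) :
    Consistent c ((α, c + 1, σ) ::ₘ B) ∧
      arcRank ((α, c + 1, σ) ::ₘ B) = arcRank A ∧
      Multiset.card ((α, c + 1, σ) ::ₘ B) + 1 = Multiset.card A := by
  have hαg : α < g := (hA.1 _ he₁).1
  have hBsub : ∀ y ∈ B, y ∈ A := by
    intro y hy; rw [hB]; exact Multiset.mem_cons_of_mem (Multiset.mem_cons_of_mem hy)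
  have hnc : ∀ y ∈ ((α, c + 1, σ) ::ₘ B), ¬ Cross y ((α, c + 1, σ) : SArc) := by
    rintro y hy ⟨hsgn, hcase⟩
    simp only [show ((α, c + 1, σ) : SArc).1 = α from rfl,
      show ((α, c + 1, σ) : SArc).2.1 = c + 1 from rfl,
      show ((α, c + 1, σ) : SArc).2.2 = σ from rfl] at hsgn hcase
    have hy2 : y.1 < y.2.1 ∧ y.2.1 ≤ c + 1 := by
      rcases Multiset.mem_cons.1 hy with rfl | hy'
      · exact ⟨by show α < c + 1; omega, le_refl _⟩
      · have := hA.1 y (hBsub y hy'); exact ⟨this.1, this.2⟩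
    rcases hcase with ⟨ha1, ha2, ha3⟩ | ⟨ha1, ha2, ha3⟩
    · -- y.1 < α ∧ α ≤ y.2.1 ∧ y.2.1 < c+1
      have hyB : y ∈ B := by
        rcases Multiset.mem_cons.1 hy with rfl | hy'
        · simp at ha1
        · exact hy'
      have hyA := hBsub y hyB
      have htr : Multiset.countP (fun x : SArc => x.2.1 = y.2.1) A ≠ 0 :=
        countP_ne_of_mem (p := fun x : SArc => x.2.1 = y.2.1) hyA rfl
      have hle : y.2.1 ≤ g := by
        by_contra hgt
        exact htr (hmax y.2.1 (by omega) (by omega))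
      rcases Nat.lt_or_ge y.2.1 g with hlt | hge
      · exact hA.2.1 y hyA _ he₁ ⟨by simpa using hsgn, Or.inl ⟨by simpa using ha1,
          by simpa using ha2, by simpa using hlt⟩⟩
      · have : y.2.1 = g := by omega
        have := hmin y hyA this
        omega
    · have hy21 := hy2.2
      omega
  refine ⟨⟨?_, ?_, ?_⟩, ?_, ?_⟩
  · -- validity
    intro x hx
    rcases Multiset.mem_cons.1 hx with rfl | hx'
    · exact ⟨by simp; omega, by simp⟩
    · exact hA.1 x (hBsub x hx')
  · -- non-crossing
    intro x hx y hy
    rcases Multiset.mem_cons.1 hy with rfl | hy'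
    · exact hnc x hx
    · rcases Multiset.mem_cons.1 hx with rfl | hx'
      · intro hxy
        exact hnc y (Multiset.mem_cons_of_mem hy') (cross_symm hxy)
      · exact hA.2.1 x (hBsub x hx') y (hBsub y hy')
  · -- flow
    intro h h1 h2
    have HA := hA.2.2 h h1 h2
    rw [hB] at HA
    simp only [← Multiset.countP_eq_card_filter, Multiset.countP_cons] at HA ⊢
    omega
  · -- rank
    unfold arcRank
    rw [hB]
    simp only [← Multiset.countP_eq_card_filter, Multiset.countP_cons]
    have : ¬ (g = 0) := by omega
    simp only [this, if_false, if_neg this]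
    omega
  · rw [hB]; simp

end Contract


section Retail
variable {c : ℕ}

/-- replacing the tail of an arc diagram by a compatible tail -/
lemma diag_retail {p L L' : List SArc}
    (h : IsArcDiagram c (p ++ L))
    (hL : L ≠ []) (hL' : L' ≠ [])
    (hch : List.Chain' (fun x y : SArc => x.2.1 = y.1 ∧ x.2.2 ≠ y.2.2) L')
    (hhd : ∀ y ∈ L.head?, ∀ z ∈ L'.head?, z.1 = y.1 ∧ z.2.2 = y.2.2)
    (hlast : ∀ y ∈ L'.getLast?, y.2.1 = c + 1)
    (hval : ∀ y ∈ L', y.1 < y.2.1) :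
    IsArcDiagram c (p ++ L') := by
  obtain ⟨hne, hhead, hgl, hchain, hv⟩ := h
  rw [show @List.Chain' SArc = List.IsChain from rfl, List.isChain_append] at hchain
  obtain ⟨y, Lt, rfl⟩ : ∃ a t, L = a :: t := by
    cases L with
    | nil => exact absurd rfl hL
    | cons a t => exact ⟨a, t, rfl⟩
  obtain ⟨z, Lt', rfl⟩ : ∃ a t, L' = a :: t := by
    cases L' with
    | nil => exact absurd rfl hL'
    | cons a t => exact ⟨a, t, rfl⟩
  have hzy := hhd y rfl z rfl
  refine ⟨by simp, ?_, ?_, ?_, ?_⟩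
  · cases p with
    | nil =>
      simp only [List.nil_append] at hhead ⊢
      intro x hx
      simp only [List.head?_cons, Option.mem_def, Option.some.injEq] at hx
      subst hx
      rw [hzy.1]
      exact hhead y rfl
    | cons a t =>
      intro x hx
      simp only [List.cons_append, List.head?_cons, Option.mem_def, Option.some.injEq] at hx
      subst hx
      exact hhead a (by simp)
  · rw [List.getLast?_append_of_ne_nil _ (by simp)]
    exact hlast
  · rw [show @List.Chain' SArc = List.IsChain from rfl, List.isChain_append]
    refine ⟨hchain.1, hch, ?_⟩
    intro a ha b hb
    simp only [List.head?_cons, Option.mem_def, Option.some.injEq] at hb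
    subst hb
    have := hchain.2.2 a ha y rfl
    exact ⟨by rw [hzy.1]; exact this.1, by rw [hzy.2]; exact this.2⟩
  · intro x hx
    rcases List.mem_append.1 hx with hx | hx
    · exact hv x (List.mem_append.2 (Or.inl hx))
    · exact hval x hx

/-- a diagram whose arcs lie in `A` passing through the top traffic point `g`
ends with `[x, (g, c+1, τ)]`. -/
lemma wire_through {g : ℕ} {τ : Bool} {d : List SArc}
    (hd : IsArcDiagram c d)
    (hexit : ∀ y ∈ d, y.1 = g → y = (g, c + 1, τ)) (hgc : g ≤ c)
    {x : SArc} (hx : x ∈ d) (hxg : x.2.1 = g) :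
    ∃ p, d = p ++ [x, (g, c + 1, τ)] := by
  obtain ⟨p, y, q, hdq, hxy, hsgn⟩ := diag_mem_next hd hx (by omega)
  have hye : y = (g, c + 1, τ) := hexit y (by rw [hdq]; simp) (by omega)
  obtain ⟨p', hdl⟩ := diag_mem_last hd (x := y) (by rw [hdq]; simp) (by rw [hye])
  have hq : (p ++ [x]) ++ y :: q = p' ++ y :: [] := by
    rw [← hdl, hdq]; simp
  have hpw : List.Pairwise (fun a b : SArc => a.2.1 < b.2.1) (p ++ [x] ++ y :: q) := by
    rw [List.append_assoc]
    simpa using (hdq ▸ diag_pairwise_snd hd)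
  obtain ⟨h1, h2, h3⟩ := unique_split (p ++ [x]) p' hpw hq rfl
  exact ⟨p, by rw [hdq, h3, hye]⟩

end Retail


section InfixHelpers
variable {α : Type*}

lemma infix_concat {P l : List α} {z : α} (h : P <:+: l ++ [z]) :
    P <:+: l ∨ P <:+ l ++ [z] := by
  obtain ⟨u, v, huv⟩ := h
  rcases List.eq_nil_or_concat v with rfl | ⟨v', w, hv⟩
  · right; exact ⟨u, by simpa using huv⟩
  · left
    rw [List.concat_eq_append] at hv
    subst hv
    have h2 : (u ++ P ++ v') ++ [w] = l ++ [z] := by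
      rw [← huv]; simp [List.append_assoc]
    obtain ⟨h3, h4⟩ := List.append_inj' h2 rfl
    exact ⟨u, v', h3⟩

lemma suffix_concat {P₀ l : List α} {y z : α} (h : (P₀ ++ [y]) <:+ (l ++ [z])) :
    y = z ∧ P₀ <:+ l := by
  obtain ⟨u, hu⟩ := h
  have h2 : (u ++ P₀) ++ [y] = l ++ [z] := by rw [← hu]; simp [List.append_assoc]
  obtain ⟨h3, h4⟩ := List.append_inj' h2 rfl
  exact ⟨by simpa using h4, ⟨u, h3⟩⟩

lemma suffix_append_right {s l : List α} (r : List α) (h : s <:+ l) :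
    (s ++ r) <:+ (l ++ r) := by
  obtain ⟨u, rfl⟩ := h; exact ⟨u, by simp⟩

lemma infix_extend {P p : List α} (r : List α) (h : P <:+: p) : P <:+: p ++ r :=
  h.trans (List.prefix_append p r).isInfix

end InfixHelpers

lemma enc_injective : Function.Injective enc := by
  intro x y h
  unfold enc at h
  obtain ⟨h1, h2⟩ := Nat.pair_eq_pair.1 h
  obtain ⟨h3, h4⟩ := Nat.pair_eq_pair.1 h2
  have h5 : x.2.2 = y.2.2 := by
    cases hb : x.2.2 <;> cases hb2 : y.2.2 <;> rw [hb, hb2] at h4 <;> simp_all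
  exact Prod.ext h1 (Prod.ext h3 h5)

lemma key_injective {w u : List SArc} (h : key w = key u) : w = u := by
  unfold key at h
  have h2 := List.reverse_injective h
  exact List.map_injective_iff.2 enc_injective h2


section Transfer
variable {c g α : ℕ} {σ : Bool} {p u : List SArc}

lemma expand_noninterfere
    (hgc : g ≤ c) (hαg : α < g)
    (hu : IsArcDiagram c u)
    (htrafu : ∀ y ∈ u, g < y.2.1 → y.2.1 = c + 1)
    (hexitu : ∀ y ∈ u, y.1 = g → y = ((g, c + 1, !σ) : SArc))
    (hni1 : ¬ Interfere (p ++ [((α, c + 1, σ) : SArc)]) u)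
    (hni2 : ¬ Interfere u (p ++ [((α, c + 1, σ) : SArc)]))
    (hkey : ((α, c + 1, σ) : SArc) ∈ u → key u ≤ key (p ++ [((α, c + 1, σ) : SArc)])) :
    ¬ Interfere (p ++ [((α, g, σ) : SArc), ((g, c + 1, !σ) : SArc)]) u ∧
    ¬ Interfere u (p ++ [((α, g, σ) : SArc), ((g, c + 1, !σ) : SArc)]) := by
  constructor
  · rintro ⟨M, a, a', b, b', i, j, s, t, haa, hbb, h1, h2⟩
    rw [show (p ++ [((α, g, σ) : SArc), ((g, c + 1, !σ) : SArc)])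
        = (p ++ [((α, g, σ) : SArc)]) ++ [((g, c + 1, !σ) : SArc)] from by simp,
      show (((a, i, s) : SArc) :: (M ++ [((j, b, t) : SArc)]))
        = (((a, i, s) : SArc) :: M) ++ [((j, b, t) : SArc)] from by simp] at h1
    rcases infix_concat h1 with hA | hB
    · rcases infix_concat hA with hAA | hAB
      · refine hni1 ⟨M, a, a', b, b', i, j, s, t, haa, hbb, ?_, h2⟩
        have := infix_extend [((α, c + 1, σ) : SArc)] hAA
        simpa using this
      · obtain ⟨hje, hsfx⟩ := suffix_concat hAB
        obtain ⟨hj, hb, ht⟩ : j = α ∧ b = g ∧ t = σ := by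
          simpa [Prod.ext_iff] using hje
        rw [hj, ht] at h2
        rw [hb] at hbb
        have hzu : ((α, b', σ) : SArc) ∈ u := h2.subset (by simp)
        have hb' : b' = c + 1 := htrafu _ hzu (by simpa using hbb)
        rw [hb'] at h2 hzu
        obtain ⟨pu, hpu⟩ := diag_mem_last hu hzu rfl
        have hsfx2 : (((a', i, s) : SArc) :: M) ++ [((α, c + 1, σ) : SArc)]
            <:+ (pu ++ [((α, c + 1, σ) : SArc)]) := by
          refine infix_to_suffix (q := []) ?_ ?_
          · exact hpu ▸ diag_pairwise_snd hu
          · have := hpu ▸ h2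
            simpa using this
        have hsfx1 := suffix_append_right [((α, c + 1, σ) : SArc)] hsfx
        have hklt : key (p ++ [((α, c + 1, σ) : SArc)]) < key u := by
          refine key_lt (a := ((a, i, s) : SArc)) (a' := ((a', i, s) : SArc))
            (by simpa using haa) rfl (s := M ++ [((α, c + 1, σ) : SArc)]) ?_ ?_
          · simpa using hsfx1
          · rw [hpu]; simpa using hsfx2
        exact absurd (hkey hzu) (not_le.2 hklt)
    · obtain ⟨hje, -⟩ := suffix_concat hB
      obtain ⟨hj, hb, ht⟩ : j = g ∧ b = c + 1 ∧ t = !σ := by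
        simpa [Prod.ext_iff] using hje
      have hzu : ((j, b', t) : SArc) ∈ u := h2.subset (by simp)
      have := diag_snd_le hu hzu
      simp only at this
      omega
  · rintro ⟨M, a, a', b, b', i, j, s, t, haa, hbb, h1, h2⟩
    rw [show (p ++ [((α, g, σ) : SArc), ((g, c + 1, !σ) : SArc)])
        = (p ++ [((α, g, σ) : SArc)]) ++ [((g, c + 1, !σ) : SArc)] from by simp,
      show (((a', i, s) : SArc) :: (M ++ [((j, b', t) : SArc)]))
        = (((a', i, s) : SArc) :: M) ++ [((j, b', t) : SArc)] from by simp] at h2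
    rcases infix_concat h2 with hA | hB
    · rcases infix_concat hA with hAA | hAB
      · refine hni2 ⟨M, a, a', b, b', i, j, s, t, haa, hbb, h1, ?_⟩
        have := infix_extend [((α, c + 1, σ) : SArc)] hAA
        simpa using this
      · obtain ⟨hje, hsfx⟩ := suffix_concat hAB
        obtain ⟨hj, hb, ht⟩ : j = α ∧ b' = g ∧ t = σ := by
          simpa [Prod.ext_iff] using hje
        rw [hj, ht] at h1
        rw [hb] at hbb
        have hw2 : ((((a', i, s) : SArc) :: M) ++ [((α, c + 1, σ) : SArc)])
            <:+ (p ++ [((α, c + 1, σ) : SArc)]) := suffix_append_right _ hsfx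
        refine hni2 ⟨M, a, a', b, c + 1, i, α, s, σ, haa, by omega, h1, ?_⟩
        have := hw2.isInfix
        simpa using this
    · obtain ⟨hje, -⟩ := suffix_concat hB
      obtain ⟨hj, hb, ht⟩ : j = g ∧ b' = c + 1 ∧ t = !σ := by
        simpa [Prod.ext_iff] using hje
      rw [hj, ht] at h1
      have hzu : ((g, b, !σ) : SArc) ∈ u := h1.subset (by simp)
      have := hexitu _ hzu rfl
      have hbc : b = c + 1 := by simpa [Prod.ext_iff] using this
      omega


/-- contracting the minimal wire through `e₁ = (α,g,σ)` into `[(α,c+1,σ)]`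
creates no interference. -/
lemma contract_noninterfere
    (hgc : g ≤ c) (hαg : α < g)
    (hu : IsArcDiagram c u)
    (htrafu : ∀ y ∈ u, g < y.2.1 → y.2.1 = c + 1)
    (hexitu : ∀ y ∈ u, y.1 = g → y = ((g, c + 1, !σ) : SArc))
    (hni1 : ¬ Interfere (p ++ [((α, g, σ) : SArc), ((g, c + 1, !σ) : SArc)]) u)
    (hni2 : ¬ Interfere u (p ++ [((α, g, σ) : SArc), ((g, c + 1, !σ) : SArc)]))
    (hkey : ((α, g, σ) : SArc) ∈ u →
      key (p ++ [((α, g, σ) : SArc), ((g, c + 1, !σ) : SArc)]) ≤ key u) :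
    ¬ Interfere (p ++ [((α, c + 1, σ) : SArc)]) u ∧
    ¬ Interfere u (p ++ [((α, c + 1, σ) : SArc)]) := by
  constructor
  · rintro ⟨M, a, a', b, b', i, j, s, t, haa, hbb, h1, h2⟩
    rw [show (((a, i, s) : SArc) :: (M ++ [((j, b, t) : SArc)]))
        = (((a, i, s) : SArc) :: M) ++ [((j, b, t) : SArc)] from by simp] at h1
    rcases infix_concat h1 with hA | hB
    · refine hni1 ⟨M, a, a', b, b', i, j, s, t, haa, hbb, ?_, h2⟩
      have := infix_extend [((α, g, σ) : SArc), ((g, c + 1, !σ) : SArc)] hA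
      simpa using this
    · obtain ⟨hje, -⟩ := suffix_concat hB
      obtain ⟨hj, hb, ht⟩ : j = α ∧ b = c + 1 ∧ t = σ := by
        simpa [Prod.ext_iff] using hje
      have hzu : ((j, b', t) : SArc) ∈ u := h2.subset (by simp)
      have := diag_snd_le hu hzu
      simp only at this
      omega
  · rintro ⟨M, a, a', b, b', i, j, s, t, haa, hbb, h1, h2⟩
    rw [show (((a', i, s) : SArc) :: (M ++ [((j, b', t) : SArc)]))
        = (((a', i, s) : SArc) :: M) ++ [((j, b', t) : SArc)] from by simp] at h2
    rcases infix_concat h2 with hA | hB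
    · refine hni2 ⟨M, a, a', b, b', i, j, s, t, haa, hbb, h1, ?_⟩
      have := infix_extend [((α, g, σ) : SArc), ((g, c + 1, !σ) : SArc)] hA
      simpa using this
    · obtain ⟨hje, hsfx⟩ := suffix_concat hB
      obtain ⟨hj, hb', ht⟩ : j = α ∧ b' = c + 1 ∧ t = σ := by
        simpa [Prod.ext_iff] using hje
      rw [hj, ht] at h1
      have hblt : b < c + 1 := by omega
      by_cases hbg : b = g
      · rw [hbg] at h1
        have hzu : ((α, g, σ) : SArc) ∈ u := h1.subset (by simp)
        obtain ⟨pu, hpu⟩ := wire_through hu hexitu hgc hzu rfl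
        have hsu : (((a, i, s) : SArc) :: M) ++ [((α, g, σ) : SArc)]
            <:+ pu ++ [((α, g, σ) : SArc)] := by
          refine infix_to_suffix (q := [((g, c + 1, !σ) : SArc)]) ?_ ?_
          · exact hpu ▸ diag_pairwise_snd hu
          · have := hpu ▸ h1; simpa using this
        have hsu2 := suffix_append_right [((g, c + 1, !σ) : SArc)] hsu
        have hsw := suffix_append_right
          [((α, g, σ) : SArc), ((g, c + 1, !σ) : SArc)] hsfx
        have hklt : key u < key (p ++ [((α, g, σ) : SArc), ((g, c + 1, !σ) : SArc)]) := by
          refine key_lt (a := ((a, i, s) : SArc)) (a' := ((a', i, s) : SArc))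
            (by simpa using haa) rfl
            (s := M ++ [((α, g, σ) : SArc), ((g, c + 1, !σ) : SArc)]) ?_ ?_
          · rw [hpu]; simpa using hsu2
          · simpa using hsw
        exact absurd (hkey hzu) (not_le.2 hklt)
      · rcases Nat.lt_or_ge b g with hlt | hge
        · have hsw := suffix_append_right [((α, g, σ) : SArc)] hsfx
          refine hni2 ⟨M, a, a', b, g, i, α, s, σ, haa, hlt, h1, ?_⟩
          have := infix_extend [((g, c + 1, !σ) : SArc)] hsw.isInfix
          simpa using this
        · have hzu : ((α, b, σ) : SArc) ∈ u := h1.subset (by simp)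
          have := htrafu _ hzu (by simp; omega)
          simp only at this
          omega

end Transfer


lemma pick_min {D : Multiset (List SArc)} {P : List SArc → Prop} [DecidablePred P]
    (h : ∃ d ∈ D, P d) : ∃ w ∈ D, P w ∧ ∀ u ∈ D, P u → key w ≤ key u := by
  classical
  set l := D.toList.filter (fun d => decide (P d)) with hl
  have hne : l ≠ [] := by
    obtain ⟨d, hd, hPd⟩ := h
    intro h0
    have : d ∈ l := List.mem_filter.2 ⟨Multiset.mem_toList.2 hd, by simpa⟩
    simp [h0] at this
  obtain ⟨m, hm⟩ : ∃ m, m ∈ List.argmin key l := by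
    cases hm : List.argmin key l with
    | none => exact absurd (List.argmin_eq_none.1 hm) hne
    | some m => exact ⟨m, by simp [Option.mem_def, hm]⟩
  have hml := List.mem_filter.1 (List.argmin_mem hm)
  refine ⟨m, Multiset.mem_toList.1 hml.1, by simpa using hml.2, ?_⟩
  intro u hu hPu
  exact List.le_of_mem_argmin ((List.mem_filter (p := fun d => decide (P d))).2 ⟨Multiset.mem_toList.2 hu, by simpa⟩) (by convert hm)

lemma chain_suffix_link {c : ℕ} {d : List SArc} (hd : IsArcDiagram c d)
    {aa z : SArc} {r : List SArc} (h : (aa :: z :: r) <:+ d) :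
    aa.2.1 = z.1 ∧ aa.2.2 ≠ z.2.2 := by
  obtain ⟨q, hq⟩ := h
  have hch := hd.2.2.2.1
  rw [← hq] at hch
  exact (List.isChain_append_cons_cons.1 hch).2.1

/-- two distinct arc diagrams ending with the same arc diverge, after a common
suffix ending in `x`, at arcs with equal right data but distinct left endpoints. -/
lemma group_compare {c : ℕ} {w u : List SArc} {x : SArc}
    (hw : IsArcDiagram c w) (hu : IsArcDiagram c u)
    (hwx : ∃ pw, w = pw ++ [x]) (hux : ∃ pu, u = pu ++ [x])
    (hne : w ≠ u) :
    ∃ (aa aa' : SArc) (ss₀ : List SArc), aa.1 ≠ aa'.1 ∧ aa.2 = aa'.2 ∧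
      (aa :: (ss₀ ++ [x])) <:+ w ∧ (aa' :: (ss₀ ++ [x])) <:+ u := by
  have hproper : ∀ (d e : List SArc), IsArcDiagram c d → IsArcDiagram c e →
      d <:+ e → d ≠ e → False := by
    intro d e hd he hsfx hdne
    obtain ⟨r, hr⟩ := hsfx
    cases r with
    | nil => exact hdne (by simpa using hr)
    | cons rc rt =>
      obtain ⟨dh, dt, rfl⟩ : ∃ a t, d = a :: t := by
        cases d with
        | nil => exact absurd rfl hd.1
        | cons a t => exact ⟨a, t, rfl⟩
      have hdh0 : dh.1 = 0 := diag_head hd rfl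
      have hrc0 : rc.1 = 0 := diag_head he (by rw [← hr]; rfl)
      have hmem : dh ∈ rt ++ dh :: dt := by simp
      have hpw := diag_pairwise_fst he
      rw [← hr] at hpw
      have := (List.pairwise_cons.1 hpw).1 dh hmem
      omega
  rcases div_suffix w u with h | h | ⟨aa, aa', ss, hne', h1, h2⟩
  · exact absurd (hproper _ _ hw hu h hne) (fun h => h)
  · exact absurd (hproper _ _ hu hw h (Ne.symm hne)) (fun h => h)
  · obtain ⟨pw, hpw⟩ := hwx
    obtain ⟨pu, hpu⟩ := hux
    rcases List.eq_nil_or_concat ss with rfl | ⟨ss₀, z, hz⟩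
    · exfalso
      have h1x : (([] : List SArc) ++ [aa]) <:+ (pw ++ [x]) := by
        rw [← hpw]; simpa using h1
      have h2x : (([] : List SArc) ++ [aa']) <:+ (pu ++ [x]) := by
        rw [← hpu]; simpa using h2
      obtain ⟨he1, -⟩ := suffix_concat h1x
      obtain ⟨he2, -⟩ := suffix_concat h2x
      exact hne' (he1.trans he2.symm)
    · rw [List.concat_eq_append] at hz
      subst hz
      obtain ⟨hzx, -⟩ := suffix_concat (P₀ := aa :: ss₀) (l := pw)
          (by rw [← hpw]; simpa [List.append_assoc] using h1)
      rw [hzx] at h1 h2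
      obtain ⟨nb, rest, hnr⟩ : ∃ nb rest, ss₀ ++ [x] = nb :: rest := by
        cases ss₀ with
        | nil => exact ⟨x, [], rfl⟩
        | cons z ss₁ => exact ⟨z, ss₁ ++ [x], rfl⟩
      have h1' : (aa :: nb :: rest) <:+ w := by rw [← hnr]; exact h1
      have h2' : (aa' :: nb :: rest) <:+ u := by rw [← hnr]; exact h2
      have link1 := chain_suffix_link hw h1'
      have link2 := chain_suffix_link hu h2'
      have h2eq : aa.2 = aa'.2 := by
        refine Prod.ext (by omega) ?_
        have e1 := link1.2
        have e2 := link2.2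
        cases hb : aa.2.2 <;> cases hb2 : aa'.2.2 <;> cases hb3 : nb.2.2 <;> simp_all
      exact ⟨aa, aa', ss₀, fun hf => hne' (Prod.ext hf h2eq), h2eq, h1, h2⟩

lemma map_singleton_eq : ∀ (D : Multiset (List SArc)),
    (∀ d ∈ D, ∃ a, d = [a]) → D = (arcsOf D).map (fun a => [a]) := by
  intro D
  induction D using Multiset.induction_on with
  | empty => intro _; simp [arcsOf]
  | cons d D ih =>
    intro h
    obtain ⟨a, rfl⟩ := h _ (Multiset.mem_cons_self _ _)
    have := ih (fun d hd => h d (Multiset.mem_cons_of_mem hd))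
    rw [show arcsOf ([a] ::ₘ D) = a ::ₘ arcsOf D from by
      simp [arcsOf, Multiset.cons_bind]]
    rw [Multiset.map_cons, ← this]


section Master
variable {c : ℕ}

/-- a decomposition of `A` into pairwise non-interfering arc diagrams -/
def Good (c : ℕ) (D : Multiset (List SArc)) (A : Multiset SArc) : Prop :=
  (∀ d ∈ D, IsArcDiagram c d) ∧ (∀ d₁ ∈ D, ∀ d₂ ∈ D, ¬ Interfere d₁ d₂) ∧ arcsOf D = A

lemma arcsOf_cons (d : List SArc) (D : Multiset (List SArc)) :
    arcsOf (d ::ₘ D) = ↑d + arcsOf D := by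
  simp [arcsOf, Multiset.cons_bind]

lemma arcsOf_retail {D : Multiset (List SArc)} {w : List SArc} (hw : w ∈ D)
    {p L L' : List SArc} (hwL : w = p ++ L) :
    arcsOf ((p ++ L') ::ₘ D.erase w) + (↑L : Multiset SArc)
      = arcsOf D + (↑L' : Multiset SArc) := by
  have hD : D = w ::ₘ D.erase w := (Multiset.cons_erase hw).symm
  conv_rhs => rw [hD]
  rw [arcsOf_cons, arcsOf_cons, hwL, ← Multiset.coe_add, ← Multiset.coe_add]
  abel

lemma arcsOf_map_singleton (A : Multiset SArc) : arcsOf (A.map (fun a => [a])) = A := by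
  induction A using Multiset.induction_on with
  | empty => simp [arcsOf]
  | cons a s ih =>
    rw [Multiset.map_cons, arcsOf_cons, ih, show ((↑[a] : Multiset SArc)) = {a} from rfl,
      Multiset.singleton_add]

theorem master : ∀ (n : ℕ) (A : Multiset SArc), Multiset.card A = n → Consistent c A →
    ∃! D, Good c D A := by
  intro n
  induction n using Nat.strong_induction_on with
  | _ n IH =>
    intro A hcard hA
    classical
    have hflowP : ∀ gg, 1 ≤ gg → gg ≤ c →
        Multiset.countP (fun x : SArc => x.2.1 = gg) A
          = Multiset.countP (fun x : SArc => x.1 = gg) A := by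
      intro gg h1 h2
      simpa [Multiset.countP_eq_card_filter] using hA.2.2 gg h1 h2
    by_cases htraf : ∃ g, 1 ≤ g ∧ g ≤ c ∧
        Multiset.countP (fun x : SArc => x.2.1 = g) A ≠ 0
    · -- inductive step: contract at the top traffic point
      obtain ⟨g0, hg01, hg0c, hg0tr⟩ := htraf
      set T : Finset ℕ := (Finset.Icc 1 c).filter
        (fun gg => Multiset.countP (fun x : SArc => x.2.1 = gg) A ≠ 0) with hT
      have hTne : T.Nonempty := by
        refine ⟨g0, ?_⟩
        simp only [hT, Finset.mem_filter, Finset.mem_Icc]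
        exact ⟨⟨hg01, hg0c⟩, hg0tr⟩
      set g := T.max' hTne with hgdef
      have hgT : g ∈ T := T.max'_mem hTne
      have hgIcc := (Finset.mem_filter.1 hgT).1
      have hg1 : 1 ≤ g := (Finset.mem_Icc.1 hgIcc).1
      have hgc : g ≤ c := (Finset.mem_Icc.1 hgIcc).2
      have htr : Multiset.countP (fun x : SArc => x.2.1 = g) A ≠ 0 :=
        (Finset.mem_filter.1 hgT).2
      have hmax : ∀ h, g < h → h ≤ c →
          Multiset.countP (fun x : SArc => x.2.1 = h) A = 0 := by
        intro h hh1 hh2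
        by_contra h0
        have hhT : h ∈ T := by
          simp only [hT, Finset.mem_filter, Finset.mem_Icc]
          exact ⟨⟨by omega, hh2⟩, h0⟩
        have := T.le_max' h hhT
        omega
      obtain ⟨σ, hout, hin, he₂A⟩ := step_setup hA hg1 hgc htr hmax
      obtain ⟨e₁, he₁A', he₁g, hmin'⟩ := pick_min_fst (P := fun x : SArc => x.2.1 = g)
        (exists_of_countP_ne htr)
      set α := e₁.1 with hα
      have he₁σ : e₁.2.2 = σ := hin e₁ he₁A' he₁g
      have he₁eq : e₁ = ((α, g, σ) : SArc) :=
        Prod.ext rfl (Prod.ext (by simpa using he₁g) (by simpa using he₁σ))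
      have hαg : α < g := by
        have := (hA.1 e₁ he₁A').1
        omega
      have he₁A : ((α, g, σ) : SArc) ∈ A := he₁eq ▸ he₁A'
      have hmin : ∀ x ∈ A, x.2.1 = g → α ≤ x.1 := hmin'
      have he₂mem : ((g, c + 1, !σ) : SArc) ∈ A.erase ((α, g, σ) : SArc) := by
        rw [Multiset.mem_erase_of_ne ?_]
        · exact he₂A
        · intro h
          have := congrArg (fun z : SArc => z.2.1) h
          simp at this
          omega
      set B := (A.erase ((α, g, σ) : SArc)).erase ((g, c + 1, !σ) : SArc) with hBdef
      have hB : A = ((α, g, σ) : SArc) ::ₘ ((g, c + 1, !σ) : SArc) ::ₘ B := by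
        rw [hBdef, Multiset.cons_erase he₂mem, Multiset.cons_erase he₁A]
      obtain ⟨hA', hrank', hcard'⟩ := contract_consistent hA hg1 hgc hmax he₁A hmin hB
      set A' := ((α, c + 1, σ) : SArc) ::ₘ B with hA'def
      have hcardlt : Multiset.card A' < n := by omega
      obtain ⟨D', hD'good, hD'uniq⟩ := IH (Multiset.card A') hcardlt A' rfl hA'
      obtain ⟨hD'diag, hD'ni, hD'arcs⟩ := hD'good
      have hBsubA : ∀ y ∈ B, y ∈ A := fun y hy => by
        rw [hB]; exact Multiset.mem_cons_of_mem (Multiset.mem_cons_of_mem hy)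
      have htrafA : ∀ y ∈ A, g < y.2.1 → y.2.1 = c + 1 := by
        intro y hy hgy
        have := (hA.1 y hy).2
        by_contra h0
        exact countP_ne_of_mem (p := fun x : SArc => x.2.1 = y.2.1) hy rfl
          (hmax y.2.1 hgy (by omega))
      have htrafA' : ∀ y ∈ A', g < y.2.1 → y.2.1 = c + 1 := by
        intro y hy hgy
        rcases Multiset.mem_cons.1 hy with rfl | hy'
        · rfl
        · exact htrafA y (hBsubA y hy') hgy
      have hexitA' : ∀ y ∈ A', y.1 = g → y = ((g, c + 1, !σ) : SArc) := by
        intro y hy h1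
        rcases Multiset.mem_cons.1 hy with rfl | hy'
        · exfalso; simp at h1; omega
        · exact hout y (hBsubA y hy') h1
      have hswap : A' + (↑[((α, g, σ) : SArc), ((g, c + 1, !σ) : SArc)] : Multiset SArc)
          = A + (↑[((α, c + 1, σ) : SArc)] : Multiset SArc) := by
        ext x
        rw [hA'def, hB]
        simp only [Multiset.count_add, Multiset.count_cons, ← Multiset.cons_coe,
          Multiset.coe_nil, Multiset.count_zero]
        omega
      have he'arcs : ((α, c + 1, σ) : SArc) ∈ arcsOf D' := by
        rw [hD'arcs]; exact Multiset.mem_cons_self _ _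
      obtain ⟨w', hw'D, hw'e, hw'max⟩ := pick_max (P := fun d => ((α, c + 1, σ) : SArc) ∈ d)
        (mem_arcsOf.1 he'arcs)
      have hw'diag := hD'diag w' hw'D
      obtain ⟨p, hp⟩ := diag_mem_last hw'diag hw'e rfl
      have humem : ∀ u ∈ D'.erase w', u ∈ D' := fun u hu =>
        Multiset.mem_of_le (Multiset.erase_le _ _) hu
      have huarcs : ∀ u ∈ D', ∀ y ∈ u, y ∈ A' := by
        intro u hu y hy; rw [← hD'arcs]; exact mem_arcsOf.2 ⟨u, hu, hy⟩
      have hexpdiag : IsArcDiagram c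
          (p ++ [((α, g, σ) : SArc), ((g, c + 1, !σ) : SArc)]) := by
        refine diag_retail (L := [((α, c + 1, σ) : SArc)]) (hp ▸ hw'diag)
          (by simp) (by simp) ?_ ?_ ?_ ?_
        · exact List.isChain_cons_cons.2 ⟨⟨rfl, by simp⟩, List.isChain_singleton _⟩
        · intro y hy z hz
          simp only [List.head?_cons, Option.mem_def, Option.some.injEq] at hy hz
          subst hy; subst hz
          exact ⟨rfl, rfl⟩
        · intro y hy
          rw [show ([((α, g, σ) : SArc), ((g, c + 1, !σ) : SArc)]).getLast?
            = some ((g, c + 1, !σ) : SArc) from rfl] at hy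
          simp only [Option.mem_def, Option.some.injEq] at hy
          subst hy; rfl
        · intro y hy
          simp only [List.mem_cons, List.mem_singleton, List.not_mem_nil, or_false] at hy
          rcases hy with rfl | rfl
          · simpa using hαg
          · simp; omega
      have hexpni : ∀ u ∈ D'.erase w',
          ¬ Interfere (p ++ [((α, g, σ) : SArc), ((g, c + 1, !σ) : SArc)]) u ∧
          ¬ Interfere u (p ++ [((α, g, σ) : SArc), ((g, c + 1, !σ) : SArc)]) := by
        intro u hu
        have huD' := humem u hu
        refine expand_noninterfere hgc hαg (hD'diag u huD')
          (fun y hy hgy => htrafA' y (huarcs u huD' y hy) hgy)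
          (fun y hy h1 => hexitA' y (huarcs u huD' y hy) h1)
          (hp ▸ hD'ni w' hw'D u huD') (hp ▸ hD'ni u huD' w' hw'D)
          (fun he => hp ▸ hw'max u huD' he)
      refine ⟨(p ++ [((α, g, σ) : SArc), ((g, c + 1, !σ) : SArc)]) ::ₘ D'.erase w',
        ⟨?_, ?_, ?_⟩, ?_⟩
      · intro d hd
        rcases Multiset.mem_cons.1 hd with rfl | hd'
        · exact hexpdiag
        · exact hD'diag d (humem d hd')
      · intro d₁ h₁ d₂ h₂
        rcases Multiset.mem_cons.1 h₁ with rfl | h₁'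
        · rcases Multiset.mem_cons.1 h₂ with rfl | h₂'
          · exact diag_not_interfere_self hexpdiag
          · exact (hexpni d₂ h₂').1
        · rcases Multiset.mem_cons.1 h₂ with rfl | h₂'
          · exact (hexpni d₁ h₁').2
          · exact hD'ni d₁ (humem _ h₁') d₂ (humem _ h₂')
      · have hkey2 := arcsOf_retail hw'D hp
          (L' := [((α, g, σ) : SArc), ((g, c + 1, !σ) : SArc)])
        rw [hD'arcs] at hkey2
        exact add_right_cancel (hkey2.trans hswap)
      · -- uniqueness
        intro D hD
        obtain ⟨hdg, hni, harcs⟩ := hD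
        have he₁arcs : ((α, g, σ) : SArc) ∈ arcsOf D := by rw [harcs]; exact he₁A
        obtain ⟨w, hwD, hwe, hwmin⟩ := pick_min (P := fun d => ((α, g, σ) : SArc) ∈ d)
          (mem_arcsOf.1 he₁arcs)
        have hwdiag := hdg w hwD
        have huarcsD : ∀ u ∈ D, ∀ y ∈ u, y ∈ A := by
          intro u hu y hy; rw [← harcs]; exact mem_arcsOf.2 ⟨u, hu, hy⟩
        have hwexits : ∀ y ∈ w, y.1 = g → y = ((g, c + 1, !σ) : SArc) := fun y hy h1 =>
          hout y (huarcsD w hwD y hy) h1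
        obtain ⟨pw, hpw⟩ := wire_through hwdiag hwexits hgc hwe rfl
        have hcwdiag : IsArcDiagram c (pw ++ [((α, c + 1, σ) : SArc)]) := by
          refine diag_retail (L := [((α, g, σ) : SArc), ((g, c + 1, !σ) : SArc)])
            (hpw ▸ hwdiag) (by simp) (by simp) (List.isChain_singleton _) ?_ ?_ ?_
          · intro y hy z hz
            simp only [List.head?_cons, Option.mem_def, Option.some.injEq] at hy hz
            subst hy; subst hz
            exact ⟨rfl, rfl⟩
          · intro y hy
            simp only [List.getLast?_singleton, Option.mem_def, Option.some.injEq] at hy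
            subst hy; rfl
          · intro y hy
            simp only [List.mem_singleton] at hy
            subst hy
            simp; omega
        have humemD : ∀ u ∈ D.erase w, u ∈ D := fun u hu =>
          Multiset.mem_of_le (Multiset.erase_le _ _) hu
        have hcwni : ∀ u ∈ D.erase w,
            ¬ Interfere (pw ++ [((α, c + 1, σ) : SArc)]) u ∧
            ¬ Interfere u (pw ++ [((α, c + 1, σ) : SArc)]) := by
          intro u hu
          have huD := humemD u hu
          refine contract_noninterfere hgc hαg (hdg u huD)
            (fun y hy hgy => htrafA y (huarcsD u huD y hy) hgy)
            (fun y hy h1 => hout y (huarcsD u huD y hy) h1)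
            (hpw ▸ hni w hwD u huD) (hpw ▸ hni u huD w hwD)
            (fun he => hpw ▸ hwmin u huD he)
        have hD₀good : Good c ((pw ++ [((α, c + 1, σ) : SArc)]) ::ₘ D.erase w) A' := by
          refine ⟨?_, ?_, ?_⟩
          · intro d hd
            rcases Multiset.mem_cons.1 hd with rfl | hd'
            · exact hcwdiag
            · exact hdg d (humemD d hd')
          · intro d₁ h₁ d₂ h₂
            rcases Multiset.mem_cons.1 h₁ with rfl | h₁'
            · rcases Multiset.mem_cons.1 h₂ with rfl | h₂'
              · exact diag_not_interfere_self hcwdiag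
              · exact (hcwni d₂ h₂').1
            · rcases Multiset.mem_cons.1 h₂ with rfl | h₂'
              · exact (hcwni d₁ h₁').2
              · exact hni d₁ (humemD _ h₁') d₂ (humemD _ h₂')
          · have hkey2 := arcsOf_retail hwD hpw (L' := [((α, c + 1, σ) : SArc)])
            rw [harcs] at hkey2
            exact add_right_cancel (hkey2.trans hswap.symm)
        have hD₀eq : ((pw ++ [((α, c + 1, σ) : SArc)]) ::ₘ D.erase w) = D' :=
          hD'uniq _ hD₀good
        have hcwmax : ∀ u ∈ ((pw ++ [((α, c + 1, σ) : SArc)]) ::ₘ D.erase w),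
            ((α, c + 1, σ) : SArc) ∈ u → key u ≤ key (pw ++ [((α, c + 1, σ) : SArc)]) := by
          intro u hu hue
          rcases Multiset.mem_cons.1 hu with rfl | hu'
          · exact le_refl _
          · have huD : u ∈ D := humemD u hu'
            by_cases hequ : u = pw ++ [((α, c + 1, σ) : SArc)]
            · rw [hequ]
            · have hudiag := hdg u huD
              obtain ⟨pu, hpu2⟩ := diag_mem_last hudiag hue rfl
              obtain ⟨aa, aa', ss₀, hfne, h2eq, hsw, hsu⟩ :=
                group_compare hcwdiag hudiag ⟨pw, rfl⟩ ⟨pu, hpu2⟩ (fun h => hequ h.symm)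
              have hsw' : (aa :: ss₀) <:+ pw := by
                have hx : ((aa :: ss₀) ++ [((α, c + 1, σ) : SArc)])
                    <:+ (pw ++ [((α, c + 1, σ) : SArc)]) := by simpa using hsw
                exact (suffix_concat hx).2
              rcases Nat.lt_or_ge aa.1 aa'.1 with hlt | hge
              · exfalso
                have pat1 : (((aa.1, aa.2.1, aa.2.2) : SArc) ::
                    (ss₀ ++ [((α, g, σ) : SArc)])) <:+: w := by
                  have h1 : ((aa :: ss₀) ++ [((α, g, σ) : SArc)])
                      <:+ (pw ++ [((α, g, σ) : SArc)]) := suffix_append_right _ hsw'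
                  have h2 := infix_extend [((g, c + 1, !σ) : SArc)] h1.isInfix
                  rw [hpw]
                  simpa using h2
                have pat2 : (((aa'.1, aa.2.1, aa.2.2) : SArc) ::
                    (ss₀ ++ [((α, c + 1, σ) : SArc)])) <:+: u := by
                  have haa' : ((aa'.1, aa.2.1, aa.2.2) : SArc) = aa' := by
                    rw [show aa.2.1 = aa'.2.1 from by rw [h2eq],
                      show aa.2.2 = aa'.2.2 from by rw [h2eq]]
                  rw [haa']
                  exact hsu.isInfix
                exact hni w hwD u huD
                  ⟨ss₀, aa.1, aa'.1, g, c + 1, aa.2.1, α, aa.2.2, σ, hlt, by omega, pat1, pat2⟩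
              · have hlt' : aa'.1 < aa.1 := by omega
                exact le_of_lt (key_lt hlt' h2eq.symm hsu hsw)
        have hw'inD₀ : w' ∈ ((pw ++ [((α, c + 1, σ) : SArc)]) ::ₘ D.erase w) := by
          rw [hD₀eq]; exact hw'D
        have hcwinD' : (pw ++ [((α, c + 1, σ) : SArc)]) ∈ D' := by
          rw [← hD₀eq]; exact Multiset.mem_cons_self _ _
        have hkeq : key (pw ++ [((α, c + 1, σ) : SArc)]) = key w' :=
          le_antisymm (hw'max _ hcwinD' (by simp)) (hcwmax w' hw'inD₀ hw'e)
        have hcww' : (pw ++ [((α, c + 1, σ) : SArc)]) = w' := key_injective hkeq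
        have hpwp : pw = p := by
          have : pw ++ [((α, c + 1, σ) : SArc)] = p ++ [((α, c + 1, σ) : SArc)] := by
            rw [hcww', hp]
          exact List.append_cancel_right this
        have herase : D'.erase w' = D.erase w := by
          rw [← hcww', ← hD₀eq, Multiset.erase_cons_head]
        rw [hpw] at herase
        calc D = w ::ₘ D.erase w := (Multiset.cons_erase hwD).symm
          _ = (p ++ [((α, g, σ) : SArc), ((g, c + 1, !σ) : SArc)]) ::ₘ D'.erase w' := by
              rw [hpw, herase, hpwp]

    · -- base case: no interior traffic, every arc is (0, c+1, _)
      push_neg at htraf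
      have hall : ∀ x ∈ A, x.1 = 0 ∧ x.2.1 = c + 1 := by
        intro x hx
        obtain ⟨hv1, hv2⟩ := hA.1 x hx
        constructor
        · by_contra h0
          have h1 : 1 ≤ x.1 := by omega
          have h2 : x.1 ≤ c := by omega
          have := htraf x.1 h1 h2
          rw [hflowP x.1 h1 h2] at this
          exact countP_ne_of_mem (p := fun y : SArc => y.1 = x.1) hx rfl this
        · by_contra h0
          have h1 : 1 ≤ x.2.1 := by omega
          have h2 : x.2.1 ≤ c := by omega
          exact countP_ne_of_mem (p := fun y : SArc => y.2.1 = x.2.1) hx rfl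
            (htraf x.2.1 h1 h2)
      have harcmap := arcsOf_map_singleton A
      refine ⟨A.map (fun a => [a]), ⟨?_, ?_, harcmap⟩, ?_⟩
      · intro d hd
        obtain ⟨a, ha, rfl⟩ := Multiset.mem_map.1 hd
        obtain ⟨h0, hc1⟩ := hall a ha
        exact ⟨by simp, by simpa using h0, by simpa using hc1,
          List.isChain_singleton _, by simpa using (hA.1 a ha).1⟩
      · intro d₁ h₁ d₂ h₂
        rintro ⟨M, a, a', b, b', i, j, s, t, -, -, h1, -⟩
        obtain ⟨x, hx, rfl⟩ := Multiset.mem_map.1 h₁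
        have := h1.length_le
        simp at this
      · intro D hD
        obtain ⟨hdg, hni, harcs⟩ := hD
        have hsingle : ∀ d ∈ D, ∃ a, d = [a] := by
          intro d hd
          have hdd := hdg d hd
          obtain ⟨x, tl, rfl⟩ : ∃ x tl, d = x :: tl := by
            cases d with
            | nil => exact absurd rfl hdd.1
            | cons x tl => exact ⟨x, tl, rfl⟩
          cases tl with
          | nil => exact ⟨x, rfl⟩
          | cons y tl' =>
            exfalso
            have hyA : y ∈ A := by
              rw [← harcs]; exact mem_arcsOf.2 ⟨_, hd, by simp⟩
            have hy0 := (hall y hyA).1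
            have hlink : x.2.1 = y.1 := (List.isChain_cons_cons.1 (diag_chain hdd)).1
            have hxA : x ∈ A := by
              rw [← harcs]; exact mem_arcsOf.2 ⟨_, hd, by simp⟩
            have := (hall x hxA).2
            omega
        have := map_singleton_eq D hsingle
        rw [this, harcs]

end Master


lemma good_card {c : ℕ} {D : Multiset (List SArc)}
    (hdg : ∀ d ∈ D, IsArcDiagram c d) :
    arcRank (arcsOf D) = Multiset.card D := by
  unfold arcRank
  rw [← Multiset.countP_eq_card_filter, countP_arcsOf]
  rw [Multiset.map_congr rfl (fun d hd => diag_rank (hdg d hd))]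
  simp

lemma good_maps {c k : ℕ} {D : Multiset (List SArc)}
    (hcard : Multiset.card D = k) (hdg : ∀ d ∈ D, IsArcDiagram c d)
    (hnc : ∀ d₁ ∈ D, ∀ d₂ ∈ D, ¬ DiagCross d₁ d₂) :
    Consistent c (arcsOf D) ∧ arcRank (arcsOf D) = k := by
  refine ⟨⟨?_, ?_, ?_⟩, ?_⟩
  · intro x hx
    obtain ⟨d, hd, hxd⟩ := mem_arcsOf.1 hx
    exact ⟨(hdg d hd).2.2.2.2 x hxd, diag_snd_le (hdg d hd) hxd⟩
  · intro x hx y hy hcross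
    obtain ⟨d₁, h₁, hx₁⟩ := mem_arcsOf.1 hx
    obtain ⟨d₂, h₂, hy₂⟩ := mem_arcsOf.1 hy
    exact hnc d₁ h₁ d₂ h₂ ⟨x, hx₁, y, hy₂, hcross⟩
  · intro gg h1 h2
    rw [← Multiset.countP_eq_card_filter, ← Multiset.countP_eq_card_filter,
      countP_arcsOf, countP_arcsOf]
    rw [Multiset.map_congr rfl (fun d hd => diag_flow (hdg d hd) h1 h2)]
  · rw [good_card hdg, hcard]

/-- taking multiset unions of arcs is a bijection from multisets of
`k` pairwise non-crossing and non-interfering arc diagrams onto consistent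
rank-`k` multisets of signed arcs. -/
theorem statement15 (c k : ℕ) (hc : 1 ≤ c) :
    Set.BijOn arcsOf
      {D : Multiset (List SArc) |
        Multiset.card D = k ∧ (∀ d ∈ D, IsArcDiagram c d) ∧
        ∀ d₁ ∈ D, ∀ d₂ ∈ D, ¬ DiagCross d₁ d₂ ∧ ¬ Interfere d₁ d₂}
      {A : Multiset SArc | Consistent c A ∧ arcRank A = k} := by
  classical
  refine ⟨?_, ?_, ?_⟩
  · -- MapsTo
    rintro D ⟨hcard, hdg, hpair⟩
    exact good_maps hcard hdg (fun d₁ h₁ d₂ h₂ => (hpair d₁ h₁ d₂ h₂).1)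
  · -- InjOn
    rintro D₁ ⟨hc₁, hdg₁, hp₁⟩ D₂ ⟨hc₂, hdg₂, hp₂⟩ heq
    have hA := (good_maps hc₁ hdg₁ (fun a ha b hb => (hp₁ a ha b hb).1)).1
    obtain ⟨Dc, hgood, huniq⟩ := master (c := c) (Multiset.card (arcsOf D₁)) (arcsOf D₁) rfl hA
    have e1 : D₁ = Dc := huniq D₁ ⟨hdg₁, fun a ha b hb => (hp₁ a ha b hb).2, rfl⟩
    have e2 : D₂ = Dc := huniq D₂ ⟨hdg₂, fun a ha b hb => (hp₂ a ha b hb).2, heq.symm⟩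
    rw [e1, e2]
  · -- SurjOn
    rintro A ⟨hAc, hArank⟩
    obtain ⟨D, ⟨hdg, hniD, harcs⟩, -⟩ := master (c := c) (Multiset.card A) A rfl hAc
    refine ⟨D, ⟨?_, hdg, ?_⟩, harcs⟩
    · rw [← hArank, ← harcs]
      exact (good_card hdg).symm
    · intro d₁ h₁ d₂ h₂
      refine ⟨?_, hniD d₁ h₁ d₂ h₂⟩
      rintro ⟨x, hx, y, hy, hcr⟩
      exact hAc.2.1 x (by rw [← harcs]; exact mem_arcsOf.2 ⟨d₁, h₁, hx⟩)
        y (by rw [← harcs]; exact mem_arcsOf.2 ⟨d₂, h₂, hy⟩) hcr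

end PaperDKK
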